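/- arXiv:2010.03085 — 2 statements merged into one kernel-verified Lean document; each statement's English description precedes it below -/
import Mathlib

section
/- Let L, R be 2×2 complex matrices satisfying the coin condition L*L + R*R = I. If u is a unit vector in ℂ² such that |⟨u, Lu⟩|² + |⟨u, Ru⟩|² = 1, then u is a common eigenvector of L and R. -/
/-!
The coin condition gives `‖Lu‖² + ‖Ru‖² = ‖u‖² = 1`, so the hypothesis forces equality in both
Cauchy–Schwarz bounds `|⟨u, Lu⟩| ≤ ‖Lu‖` and `|⟨u, Ru⟩| ≤ ‖Ru‖`; by the equality case, `Lu` and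
`Ru` are multiples of `u`.
-/

open Matrix

section InnerProductSpace

variable {𝕜 E : Type*} [RCLike 𝕜] [NormedAddCommGroup E] [InnerProductSpace 𝕜 E]

theorem exists_eq_smul_of_norm_mul_le_norm_inner {u x : E} (hu : u ≠ 0)
    (h : ‖u‖ * ‖x‖ ≤ ‖inner 𝕜 u x‖) : ∃ a : 𝕜, x = a • u :=
  Or.resolve_left (((norm_inner_eq_norm_tfae 𝕜 u x).out 0 2).mp
    (le_antisymm (norm_inner_le_norm u x) h)) hu

theorem exists_eq_smul_and_exists_eq_smul_of_sq_norm_add_le {u x y : E} (hu : ‖u‖ = 1)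
    (h : ‖x‖ ^ 2 + ‖y‖ ^ 2 ≤ ‖inner 𝕜 u x‖ ^ 2 + ‖inner 𝕜 u y‖ ^ 2) :
    (∃ a : 𝕜, x = a • u) ∧ (∃ b : 𝕜, y = b • u) := by
  have hu₀ : u ≠ 0 := norm_ne_zero_iff.mp (by rw [hu]; exact one_ne_zero)
  have hx : ‖inner 𝕜 u x‖ ≤ ‖x‖ := by simpa [hu] using norm_inner_le_norm (𝕜 := 𝕜) u x
  have hy : ‖inner 𝕜 u y‖ ≤ ‖y‖ := by simpa [hu] using norm_inner_le_norm (𝕜 := 𝕜) u y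
  have hx2 := pow_le_pow_left₀ (norm_nonneg _) hx 2
  have hy2 := pow_le_pow_left₀ (norm_nonneg _) hy 2
  refine ⟨exists_eq_smul_of_norm_mul_le_norm_inner hu₀ ?_,
    exists_eq_smul_of_norm_mul_le_norm_inner hu₀ ?_⟩
  · rw [hu, one_mul]
    exact (pow_le_pow_iff_left₀ (norm_nonneg _) (norm_nonneg _) two_ne_zero).mp (by linarith)
  · rw [hu, one_mul]
    exact (pow_le_pow_iff_left₀ (norm_nonneg _) (norm_nonneg _) two_ne_zero).mp (by linarith)

end InnerProductSpace

section Matrix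

open WithLp

variable {𝕜 m n : Type*} [RCLike 𝕜] [Fintype m] [Fintype n]

theorem inner_toLp_toLp_eq_star_dotProduct (x y : n → 𝕜) :
    inner 𝕜 (toLp 2 x) (toLp 2 y) = star x ⬝ᵥ y := by
  rw [EuclideanSpace.inner_toLp_toLp, dotProduct_comm]

theorem sq_norm_toLp (x : n → 𝕜) : ‖toLp 2 x‖ ^ 2 = RCLike.re (star x ⬝ᵥ x) := by
  rw [norm_sq_eq_re_inner (𝕜 := 𝕜), inner_toLp_toLp_eq_star_dotProduct]

theorem star_mulVec_dotProduct_mulVec (M : Matrix m n 𝕜) (x : n → 𝕜) :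
    star (M *ᵥ x) ⬝ᵥ M *ᵥ x = star x ⬝ᵥ (Mᴴ * M) *ᵥ x := by
  rw [star_mulVec, ← dotProduct_mulVec, mulVec_mulVec]

theorem sq_norm_toLp_mulVec_add_sq_norm_toLp_mulVec [DecidableEq n] {L R : Matrix m n 𝕜}
    (hLR : Lᴴ * L + Rᴴ * R = 1) (x : n → 𝕜) :
    ‖toLp 2 (L *ᵥ x)‖ ^ 2 + ‖toLp 2 (R *ᵥ x)‖ ^ 2 = ‖toLp 2 x‖ ^ 2 := by
  rw [sq_norm_toLp, sq_norm_toLp, sq_norm_toLp, ← map_add, star_mulVec_dotProduct_mulVec,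
    star_mulVec_dotProduct_mulVec, ← dotProduct_add, ← add_mulVec, hLR, one_mulVec]

end Matrix

theorem stmt0 (L R : Matrix (Fin 2) (Fin 2) ℂ)
    (hcoin : Lᴴ * L + Rᴴ * R = 1)
    (u : Fin 2 → ℂ) (hu : star u ⬝ᵥ u = 1)
    (h : ‖star u ⬝ᵥ L.mulVec u‖ ^ 2 + ‖star u ⬝ᵥ R.mulVec u‖ ^ 2 = 1) :
    (∃ a : ℂ, L.mulVec u = a • u) ∧ (∃ b : ℂ, R.mulVec u = b • u) := by
  have hv : ‖WithLp.toLp 2 u‖ = 1 := by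
    rw [← pow_eq_one_iff_of_nonneg (norm_nonneg _) two_ne_zero, sq_norm_toLp, hu, RCLike.one_re]
  have hnorms := sq_norm_toLp_mulVec_add_sq_norm_toLp_mulVec hcoin u
  rw [hv, one_pow] at hnorms
  obtain ⟨⟨a, ha⟩, ⟨b, hb⟩⟩ := exists_eq_smul_and_exists_eq_smul_of_sq_norm_add_le (𝕜 := ℂ)
    (x := WithLp.toLp 2 (L *ᵥ u)) (y := WithLp.toLp 2 (R *ᵥ u)) hv
    (by rw [inner_toLp_toLp_eq_star_dotProduct, inner_toLp_toLp_eq_star_dotProduct, h, hnorms])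
  exact ⟨⟨a, congrArg WithLp.ofLp ha⟩, ⟨b, congrArg WithLp.ofLp hb⟩⟩
end

section
/- Let p ∈ [0,1]. The series ∑_{n≥0} C(2n, n) · pⁿ (1−p)ⁿ diverges (equals +∞) if and only if p = 1/2. -/
/-!
Writing the terms as `centralBinom n * (p (1 - p))^n`, the bounds
`4^n / (2n) ≤ centralBinom n ≤ 4^n` show that `∑ centralBinom n * x^n` converges exactly when
`|x| < 1/4`: below that radius it is dominated by a geometric series, and at `|x| ≥ 1/4` its
terms dominate half the harmonic series. Finally `p (1 - p) = 1/4 - (p - 1/2)^2` lies in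
`[0, 1/4]` for `p ∈ [0, 1]`, with the value `1/4` only at `p = 1/2`.
-/

open Nat Set

theorem Nat.inv_two_mul_one_div_le_centralBinom_div_four_pow (n : ℕ) :
    (2 : ℝ)⁻¹ * (1 / n) ≤ centralBinom n / 4 ^ n := by
  rcases Nat.eq_zero_or_pos n with rfl | hn
  · simp
  have hbound : (4 : ℝ) ^ n ≤ 2 * n * centralBinom n := by
    exact_mod_cast four_pow_le_two_mul_self_mul_centralBinom n hn
  rw [le_div_iff₀ (by positivity)]
  calc (2 : ℝ)⁻¹ * (1 / n) * 4 ^ n ≤ (2 : ℝ)⁻¹ * (1 / n) * (2 * n * centralBinom n) := by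
        gcongr
    _ = centralBinom n := by field_simp

theorem summable_centralBinom_mul_pow_iff {x : ℝ} :
    Summable (fun n => (centralBinom n : ℝ) * x ^ n) ↔ |x| < 1 / 4 := by
  rw [← summable_abs_iff]
  simp only [abs_mul, abs_pow, Nat.abs_cast]
  constructor
  · intro hs
    by_contra! hx
    apply Real.not_summable_one_div_natCast
    rw [← summable_mul_left_iff (inv_ne_zero two_ne_zero)]
    refine hs.of_nonneg_of_le (fun n => by positivity) fun n => ?_
    calc (2 : ℝ)⁻¹ * (1 / n) ≤ centralBinom n / 4 ^ n :=
          inv_two_mul_one_div_le_centralBinom_div_four_pow n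
      _ = centralBinom n * (1 / 4) ^ n := by rw [one_div_pow, div_eq_mul_one_div]
      _ ≤ centralBinom n * |x| ^ n := by gcongr
  · intro hx
    refine (summable_geometric_of_lt_one (by positivity) (by linarith : 4 * |x| < 1)).of_nonneg_of_le
      (fun n => by positivity) fun n => ?_
    calc (centralBinom n : ℝ) * |x| ^ n ≤ 4 ^ n * |x| ^ n := by
          gcongr
          exact_mod_cast centralBinom_le_four_pow n
      _ = (4 * |x|) ^ n := (mul_pow _ _ _).symm

theorem abs_mul_one_sub_lt_quarter_iff {p : ℝ} (hp : p ∈ Icc 0 1) :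
    |p * (1 - p)| < 1 / 4 ↔ p ≠ 1 / 2 := by
  obtain ⟨hp0, hp1⟩ := hp
  have hcompl : p * (1 - p) = 1 / 4 - (p - 1 / 2) ^ 2 := by ring
  rw [abs_of_nonneg (mul_nonneg hp0 (sub_nonneg.2 hp1)), hcompl, sub_lt_self_iff,
    sq_pos_iff, sub_ne_zero]

theorem stmt2 (p : ℝ) (hp : p ∈ Set.Icc (0 : ℝ) 1) :
    ¬ Summable (fun n : ℕ => ((2 * n).choose n : ℝ) * p ^ n * (1 - p) ^ n) ↔ p = 1 / 2 := by
  have hterms : (fun n : ℕ => ((2 * n).choose n : ℝ) * p ^ n * (1 - p) ^ n) =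
      fun n => (centralBinom n : ℝ) * (p * (1 - p)) ^ n := by
    ext n
    rw [centralBinom_eq_two_mul_choose, mul_pow, mul_assoc]
  rw [hterms, summable_centralBinom_mul_pow_iff, abs_mul_one_sub_lt_quarter_iff hp, not_not]
end
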